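/- arXiv:math/0509360 — 2 statements merged into one kernel-verified Lean document; each statement's English description precedes it below -/
import Mathlib

section
/- Let (S_j)_{j=0}^{N-1} be a representation of the Cuntz algebra 𝒪_N on H, let f ∈ H with ‖f‖ = 1, let μ_f be a spectral measure of f on [0,1), and let k ≥ 1. Let ψ : ℝ → ℂ be continuous and set ψ̂(t) := ∫_0^1 ψ(x) e^{−itx} dx. Assume that ∫_ℝ |t ψ̂(t)| dt < ∞ and that the Fourier inversion formula ψ(x) = (1/2π) ∫_ℝ ψ̂(t) e^{itx} dt holds for all x ∈ [0,1]. Then | ∫_{[0,1)} ψ dμ_f − ∫_{[0,1)} ψ dμ_f^{(k)} | ≤ N^{−k} ∫_ℝ |t ψ̂(t)| dt. -/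
open MeasureTheory ContinuousLinearMap
open scoped InnerProductSpace

variable {H : Type*} [NormedAddCommGroup H] [InnerProductSpace ℂ H] [CompleteSpace H]

/-- The word operator `S_α = S_{α 1} ⋯ S_{α k}` associated to a multi-index
`α ∈ {0,…,N-1}^k`. -/
noncomputable def Sw {N : ℕ} (S : Fin N → H →L[ℂ] H) {k : ℕ} (α : Fin k → Fin N) :
    H →L[ℂ] H :=
  (List.ofFn fun i => S (α i)).prod

/-- A family `S_0, …, S_{N-1}` of bounded operators is a representation of the Cuntz
algebra `𝒪_N` if `S_j^* S_k = δ_{jk} I` and `∑ j, S_j S_j^* = I`. -/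
def CuntzRep {N : ℕ} (S : Fin N → H →L[ℂ] H) : Prop :=
  (∀ j k : Fin N, adjoint (S j) ∘L S k = if j = k then 1 else 0) ∧
    ∑ j : Fin N, S j ∘L adjoint (S j) = 1

/-- `x_k(α) = α_1/N + α_2/N² + ⋯ + α_k/N^k`. -/
noncomputable def xk (N : ℕ) {k : ℕ} (α : Fin k → Fin N) : ℝ :=
  ∑ i : Fin k, (α i : ℝ) / (N : ℝ) ^ ((i : ℕ) + 1)

/-- The `N`-adic interval `I_k(α) = [x_k(α), x_k(α) + N^{-k})`. -/
noncomputable def Ik (N : ℕ) {k : ℕ} (α : Fin k → Fin N) : Set ℝ :=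
  Set.Ico (xk N α) (xk N α + ((N : ℝ) ^ k)⁻¹)

/-- A Borel measure `μ` on `[0,1)` is a spectral measure of `g` if `μ([0,1)) = ‖g‖²`
and `μ(I_k(α)) = ‖S_α^* g‖²` for every `k ≥ 1` and multi-index `α`. -/
def IsSpectralMeasureR {N : ℕ} (S : Fin N → H →L[ℂ] H) (g : H) (μ : Measure ℝ) : Prop :=
  μ (Set.Ico (0:ℝ) 1)ᶜ = 0 ∧ μ Set.univ = ENNReal.ofReal (‖g‖ ^ 2) ∧
    ∀ k : ℕ, 1 ≤ k → ∀ α : Fin k → Fin N,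
      μ (Ik N α) = ENNReal.ofReal (‖adjoint (Sw S α) g‖ ^ 2)

/-- The atomic measure `μ_f^{(k)} = ∑_α ‖S_α^* f‖² δ_{x_k(α)}`. -/
noncomputable def muk {N : ℕ} (S : Fin N → H →L[ℂ] H) (f : H) (k : ℕ) : Measure ℝ :=
  ∑ α : Fin k → Fin N,
    ENNReal.ofReal (‖adjoint (Sw S α) f‖ ^ 2) • Measure.dirac (xk N α)

/-! Fourier inversion makes `ψ` Lipschitz on `[0,1]` with constant `∫ |t ψ̂(t)| dt`, because
`|e^{itx} - e^{ity}| ≤ |t| |x - y|` (the factor `1/2π` only helps). The intervals `I_k(α)` are the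
intervals `[m/N^k, (m+1)/N^k)`, `m` running through the numbers with `k` base-`N` digits, so they
partition `[0,1)`; `μ_f(I_k(α)) = ‖S_α^* f‖²` is the mass of the atom `x_k(α) ∈ I_k(α)` of
`μ_f^{(k)}`, and `ψ` varies by at most `N^{-k} ∫ |t ψ̂(t)| dt` on `I_k(α)`. Summing over `α` against
the total mass `μ_f([0,1)) ≤ 1` gives the bound. -/

open Set Function
open scoped ENNReal

theorem norm_exp_I_mul_sub_exp_I_mul_le (a b : ℝ) :
    ‖Complex.exp (Complex.I * a) - Complex.exp (Complex.I * b)‖ ≤ |a - b| := by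
  have hfactor : Complex.exp (Complex.I * a) - Complex.exp (Complex.I * b) =
      Complex.exp (Complex.I * b) * (Complex.exp (Complex.I * ↑(a - b)) - 1) := by
    rw [mul_sub, ← Complex.exp_add]
    push_cast
    ring_nf
  rw [hfactor, norm_mul, Complex.norm_exp_I_mul_ofReal, one_mul, ← Real.norm_eq_abs]
  exact Real.norm_exp_I_mul_ofReal_sub_one_le

theorem integrable_of_continuous_of_integrable_smul {E : Type*} [NormedAddCommGroup E]
    [NormedSpace ℝ E] {g : ℝ → E} (hg : Continuous g) (hsmul : Integrable fun t : ℝ => t • g t) :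
    Integrable g := by
  have hout : IntegrableOn g (Icc (-1) 1)ᶜ := by
    refine Integrable.mono hsmul.integrableOn hg.aestronglyMeasurable.restrict ?_
    filter_upwards [ae_restrict_mem measurableSet_Icc.compl] with t ht
    have h1t : 1 ≤ |t| := le_of_lt (lt_of_not_ge fun h => ht (abs_le.1 h))
    rw [norm_smul, Real.norm_eq_abs]
    exact le_mul_of_one_le_left (norm_nonneg _) h1t
  rw [← integrableOn_univ, ← union_compl_self (Icc (-1 : ℝ) 1)]
  exact hg.integrableOn_Icc.union hout

theorem norm_integral_mul_exp_sub_le {g : ℝ → ℂ} (hg : Integrable g)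
    (hsmul : Integrable fun t : ℝ => t • g t) (x y : ℝ) :
    ‖(∫ t : ℝ, g t * Complex.exp (Complex.I * t * x)) -
        ∫ t : ℝ, g t * Complex.exp (Complex.I * t * y)‖ ≤
      (∫ t : ℝ, ‖t • g t‖) * |x - y| := by
  have hint (z : ℝ) : Integrable fun t : ℝ => g t * Complex.exp (Complex.I * t * z) :=
    hg.mul_bdd (c := 1) (by fun_prop) (ae_of_all _ fun t => by
      rw [mul_assoc, ← Complex.ofReal_mul, Complex.norm_exp_I_mul_ofReal])
  have hpoint (t : ℝ) : ‖g t * Complex.exp (Complex.I * t * x) -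
      g t * Complex.exp (Complex.I * t * y)‖ ≤ ‖t • g t‖ * |x - y| := by
    calc ‖g t * Complex.exp (Complex.I * t * x) - g t * Complex.exp (Complex.I * t * y)‖
        = ‖g t‖ * ‖Complex.exp (Complex.I * ↑(t * x)) - Complex.exp (Complex.I * ↑(t * y))‖ := by
          rw [← mul_sub, norm_mul]
          simp only [Complex.ofReal_mul, mul_assoc]
      _ ≤ ‖g t‖ * |t * x - t * y| := by gcongr; exact norm_exp_I_mul_sub_exp_I_mul_le _ _
      _ = ‖t • g t‖ * |x - y| := by rw [norm_smul, ← mul_sub, abs_mul, Real.norm_eq_abs]; ring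
  rw [← integral_sub (hint x) (hint y), ← integral_mul_const]
  exact (norm_integral_le_integral_norm _).trans <| integral_mono_of_nonneg
    (ae_of_all _ fun _ => norm_nonneg _) (hsmul.norm.mul_const _) (ae_of_all _ hpoint)

theorem norm_sub_le_of_eq_fourier_inversion {ψ g : ℝ → ℂ} {s : Set ℝ} (hg : Integrable g)
    (hsmul : Integrable fun t : ℝ => t • g t)
    (hinv : ∀ x ∈ s, ψ x = (1 / (2 * Real.pi)) • ∫ t : ℝ, g t * Complex.exp (Complex.I * t * x))
    {x y : ℝ} (hx : x ∈ s) (hy : y ∈ s) :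
    ‖ψ x - ψ y‖ ≤ (∫ t : ℝ, ‖t • g t‖) * |x - y| := by
  have hconst : ‖1 / (2 * Real.pi)‖ ≤ 1 := by
    rw [Real.norm_of_nonneg (by positivity), div_le_one (by positivity)]
    linarith [Real.pi_gt_three]
  rw [hinv x hx, hinv y hy, ← smul_sub, norm_smul]
  exact (mul_le_of_le_one_left (norm_nonneg _) hconst).trans
    (norm_integral_mul_exp_sub_le hg hsmul x y)

theorem mem_Ico_div_iff_floor_eq {n m : ℕ} (hn : 0 < n) {x : ℝ} (hx : 0 ≤ x) :
    x ∈ Ico ((m : ℝ) / n) ((m + 1) / n) ↔ ⌊(n : ℝ) * x⌋₊ = m := by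
  have hn' : (0 : ℝ) < n := Nat.cast_pos.2 hn
  rw [Nat.floor_eq_iff (by positivity), mem_Ico, div_le_iff₀ hn', lt_div_iff₀ hn', mul_comm x]

theorem pairwise_disjoint_Ico_div (n : ℕ) :
    Pairwise (Disjoint on fun m : ℕ => Ico ((m : ℝ) / n) ((m + 1) / n)) := by
  have hmono : Monotone fun m : ℕ => (m : ℝ) / n := fun a b hab => by
    dsimp only
    gcongr
  simpa [Order.succ_eq_add_one] using hmono.pairwise_disjoint_on_Ico_succ

theorem iUnion_Ico_div {n : ℕ} (hn : n ≠ 0) :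
    ⋃ m : Fin n, Ico ((m : ℝ) / n) ((m + 1) / n) = Ico 0 1 := by
  have hn' : (0 : ℝ) < n := by positivity
  ext x
  simp only [mem_iUnion]
  constructor
  · rintro ⟨m, hm₁, hm₂⟩
    refine ⟨(div_nonneg m.val.cast_nonneg hn'.le).trans hm₁, hm₂.trans_le ?_⟩
    rw [div_le_one hn']
    exact_mod_cast m.isLt
  · rintro ⟨hx₀, hx₁⟩
    have hlt : ⌊(n : ℝ) * x⌋₊ < n := by
      rw [Nat.floor_lt (by positivity)]
      nlinarith
    exact ⟨⟨_, hlt⟩, (mem_Ico_div_iff_floor_eq (Nat.pos_of_ne_zero hn) hx₀).2 rfl⟩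

/-- The number with base-`N` digits `α`, most significant digit first as in `xk`. -/
def digitsEquiv (N k : ℕ) : (Fin k → Fin N) ≃ Fin (N ^ k) :=
  (Equiv.arrowCongr Fin.revPerm (Equiv.refl _)).trans finFunctionFinEquiv

theorem xk_eq_digitsEquiv_div {N k : ℕ} (hN : N ≠ 0) (α : Fin k → Fin N) :
    xk N α = (digitsEquiv N k α : ℕ) / ((N ^ k : ℕ) : ℝ) := by
  rw [digitsEquiv, Equiv.trans_apply, finFunctionFinEquiv_apply, xk]
  push_cast
  rw [Finset.sum_div]
  refine Fintype.sum_equiv Fin.revPerm _ _ fun j => ?_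
  have hpow : (N : ℝ) ^ k = (N : ℝ) ^ (j.rev : ℕ) * (N : ℝ) ^ ((j : ℕ) + 1) := by
    rw [← pow_add, Fin.val_rev]
    congr 1
    omega
  simp only [Equiv.arrowCongr_apply, Equiv.coe_refl, comp_apply, id, Fin.revPerm_symm,
    Fin.revPerm_apply, Fin.rev_rev]
  rw [hpow]
  field_simp

theorem Ik_eq_Ico_digitsEquiv {N k : ℕ} (hN : N ≠ 0) :
    Ik N (k := k) = (fun m : ℕ => Ico ((m : ℝ) / (N ^ k : ℕ)) ((m + 1) / (N ^ k : ℕ))) ∘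
      fun α => (digitsEquiv N k α : ℕ) := by
  funext α
  rw [comp_apply, Ik, xk_eq_digitsEquiv_div hN, add_div, Nat.cast_pow, one_div]

theorem pairwise_disjoint_Ik {N k : ℕ} (hN : N ≠ 0) : Pairwise (Disjoint on Ik N (k := k)) := by
  rw [Ik_eq_Ico_digitsEquiv hN]
  exact (pairwise_disjoint_Ico_div _).comp_of_injective
    (Fin.val_injective.comp (digitsEquiv N k).injective)

theorem iUnion_Ik {N k : ℕ} (hN : N ≠ 0) : ⋃ α : Fin k → Fin N, Ik N α = Ico 0 1 := by
  rw [Ik_eq_Ico_digitsEquiv hN, ← iUnion_Ico_div (pow_ne_zero k hN)]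
  exact (digitsEquiv N k).surjective.iUnion_comp fun m : Fin (N ^ k) =>
    Ico ((m : ℝ) / (N ^ k : ℕ)) ((m + 1) / (N ^ k : ℕ))

theorem Ik_subset_Ico {N k : ℕ} (hN : N ≠ 0) (α : Fin k → Fin N) : Ik N α ⊆ Ico 0 1 :=
  iUnion_Ik hN ▸ subset_iUnion (Ik N) α

theorem xk_mem_Ik {N k : ℕ} (hN : N ≠ 0) (α : Fin k → Fin N) : xk N α ∈ Ik N α :=
  left_mem_Ico.2 (lt_add_of_pos_right _ (by positivity))

theorem xk_mem_Ico {N k : ℕ} (hN : N ≠ 0) (α : Fin k → Fin N) : xk N α ∈ Ico 0 1 :=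
  Ik_subset_Ico hN α (xk_mem_Ik hN α)

theorem abs_sub_xk_le {N k : ℕ} {α : Fin k → Fin N} {y : ℝ} (hy : y ∈ Ik N α) :
    |y - xk N α| ≤ ((N : ℝ) ^ k)⁻¹ := by
  rw [abs_of_nonneg (sub_nonneg.2 hy.1)]
  linarith [hy.2]

theorem norm_setIntegral_iUnion_sub_sum_le {α ι E : Type*} [MeasurableSpace α] [Fintype ι]
    [NormedAddCommGroup E] [NormedSpace ℝ E] [CompleteSpace E] {μ : Measure α} [IsFiniteMeasure μ]
    {I : ι → Set α} (hI : ∀ i, MeasurableSet (I i)) (hd : Pairwise (Disjoint on I))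
    {ψ : α → E} (hψ : IntegrableOn ψ (⋃ i, I i) μ) (x : ι → α) {δ : ℝ}
    (hδ : ∀ i, ∀ y ∈ I i, ‖ψ y - ψ (x i)‖ ≤ δ) :
    ‖(∫ y in ⋃ i, I i, ψ y ∂μ) - ∑ i, μ.real (I i) • ψ (x i)‖ ≤ δ * μ.real (⋃ i, I i) := by
  have hψI (i : ι) : IntegrableOn ψ (I i) μ := hψ.mono_set (subset_iUnion I i)
  have hterm (i : ι) : (∫ y in I i, ψ y ∂μ) - μ.real (I i) • ψ (x i) =
      ∫ y in I i, (ψ y - ψ (x i)) ∂μ := by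
    rw [integral_sub (hψI i) (integrableOn_const (measure_ne_top μ _)), setIntegral_const]
  rw [integral_iUnion_fintype hI hd hψI, ← Finset.sum_sub_distrib, measureReal_iUnion_fintype hd hI,
    Finset.mul_sum]
  refine (norm_sum_le _ _).trans (Finset.sum_le_sum fun i _ => ?_)
  rw [hterm]
  exact norm_setIntegral_le_of_norm_le_const (measure_lt_top μ _) (hδ i)

theorem setIntegral_sum_smul_dirac {α ι E : Type*} [MeasurableSpace α]
    [MeasurableSingletonClass α] [Fintype ι] [NormedAddCommGroup E] [NormedSpace ℝ E]
    [CompleteSpace E] {s : Set α} {c : ι → ℝ≥0∞} (hc : ∀ i, c i ≠ ∞) {x : ι → α}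
    (hx : ∀ i, x i ∈ s) (f : α → E) :
    ∫ y in s, f y ∂(∑ i, c i • Measure.dirac (x i)) = ∑ i, (c i).toReal • f (x i) := by
  have hrestrict :
      (∑ i, c i • Measure.dirac (x i)).restrict s = ∑ i, c i • Measure.dirac (x i) := by
    refine Measure.restrict_eq_self_of_ae_mem ?_
    simp [ae_iff, Measure.dirac_apply, hx]
  rw [hrestrict, integral_finsetSum_measure fun i _ =>
    (integrable_dirac enorm_lt_top).smul_measure (hc i)]
  simp only [integral_smul_measure, integral_dirac]

theorem stmt_7_general {N : ℕ} (hN : 2 ≤ N) (S : Fin N → H →L[ℂ] H)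
    (f : H) (hf : ‖f‖ = 1)
    (μ : Measure ℝ) (hμ : IsSpectralMeasureR S f μ)
    (k : ℕ) (hk : 1 ≤ k)
    (ψ : ℝ → ℂ) (hψ : Continuous ψ) (ψhat : ℝ → ℂ)
    (hψhat : ∀ t : ℝ, ψhat t = ∫ x in (0:ℝ)..1, ψ x * Complex.exp (-(Complex.I * t * x)))
    (hint : Integrable (fun t : ℝ => t • ψhat t))
    (hinv : ∀ x ∈ Set.Icc (0:ℝ) 1,
      ψ x = (1 / (2 * Real.pi)) • ∫ t : ℝ, ψhat t * Complex.exp (Complex.I * t * x)) :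
    ‖(∫ x in Set.Ico (0:ℝ) 1, ψ x ∂μ) - ∫ x in Set.Ico (0:ℝ) 1, ψ x ∂(muk S f k)‖ ≤
      ((N : ℝ) ^ k)⁻¹ * ∫ t : ℝ, ‖t • ψhat t‖ := by
  have hN0 : N ≠ 0 := by omega
  obtain ⟨-, hμ_univ, hμ_Ik⟩ := hμ
  have : IsFiniteMeasure μ := ⟨by simp [hμ_univ]⟩
  have hψhat_cont : Continuous ψhat := by
    rw [funext hψhat]
    exact intervalIntegral.continuous_parametric_intervalIntegral_of_continuous' (by fun_prop) 0 1
  have hδ (α : Fin k → Fin N) (y : ℝ) (hy : y ∈ Ik N α) :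
      ‖ψ y - ψ (xk N α)‖ ≤ (∫ t : ℝ, ‖t • ψhat t‖) * ((N : ℝ) ^ k)⁻¹ :=
    (norm_sub_le_of_eq_fourier_inversion
      (integrable_of_continuous_of_integrable_smul hψhat_cont hint) hint hinv
      (Ico_subset_Icc_self (Ik_subset_Ico hN0 α hy)) (Ico_subset_Icc_self (xk_mem_Ico hN0 α))).trans
    (mul_le_mul_of_nonneg_left (abs_sub_xk_le hy) (integral_nonneg fun _ => norm_nonneg _))
  have hμ_Ico : μ.real (Ico 0 1) ≤ 1 := by
    refine (measureReal_mono (subset_univ _)).trans ?_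
    simp [measureReal_def, hμ_univ, hf]
  rw [muk, setIntegral_sum_smul_dirac (fun _ => ENNReal.ofReal_ne_top) (xk_mem_Ico hN0)]
  simp_rw [← hμ_Ik k hk, ← measureReal_def, ← iUnion_Ik hN0 (k := k)]
  calc _ ≤ ((∫ t : ℝ, ‖t • ψhat t‖) * ((N : ℝ) ^ k)⁻¹) * μ.real (⋃ α, Ik N α) :=
        norm_setIntegral_iUnion_sub_sum_le (fun _ => measurableSet_Ico) (pairwise_disjoint_Ik hN0)
          (iUnion_Ik hN0 ▸ hψ.integrableOn_Icc.mono_set Ico_subset_Icc_self) _ hδ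
    _ ≤ ((N : ℝ) ^ k)⁻¹ * ∫ t : ℝ, ‖t • ψhat t‖ := by
        rw [iUnion_Ik hN0, mul_comm _ ((N : ℝ) ^ k)⁻¹]
        exact mul_le_of_le_one_right (by positivity) hμ_Ico

/-- Approximation of integrals against a spectral measure by those against the atomic
measures `μ_f^{(k)}`: `|∫ψ dμ_f − ∫ψ dμ_f^{(k)}| ≤ N^{-k} ∫_ℝ |t ψ̂(t)| dt`. -/
theorem stmt_7 {N : ℕ} (hN : 2 ≤ N) (S : Fin N → H →L[ℂ] H) (hS : CuntzRep S)
    (f : H) (hf : ‖f‖ = 1)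
    (μ : Measure ℝ) (hμ : IsSpectralMeasureR S f μ)
    (k : ℕ) (hk : 1 ≤ k)
    (ψ : ℝ → ℂ) (hψ : Continuous ψ) (ψhat : ℝ → ℂ)
    (hψhat : ∀ t : ℝ, ψhat t = ∫ x in (0:ℝ)..1, ψ x * Complex.exp (-(Complex.I * t * x)))
    (hint : Integrable (fun t : ℝ => t • ψhat t))
    (hinv : ∀ x ∈ Set.Icc (0:ℝ) 1,
      ψ x = (1 / (2 * Real.pi)) • ∫ t : ℝ, ψhat t * Complex.exp (Complex.I * t * x)) :
    ‖(∫ x in Set.Ico (0:ℝ) 1, ψ x ∂μ) - ∫ x in Set.Ico (0:ℝ) 1, ψ x ∂(muk S f k)‖ ≤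
      ((N : ℝ) ^ k)⁻¹ * ∫ t : ℝ, ‖t • ψhat t‖ :=
  stmt_7_general hN S f hf μ hμ k hk ψ hψ ψhat hψhat hint hinv
end

section
/- Let (S_j)_{j=0}^{N-1} be a representation of the Cuntz algebra 𝒪_N on H, let (σ_i)_{i=0}^{N-1} be a complete and non-overlapping iterated function system on a compact metric space X, let f ∈ H, and fix i ∈ {0,…,N−1}. If μ is a spectral measure of f and ν is a spectral measure of S_i f, then ν equals the pushforward μ ∘ σ_i^{−1} of μ under σ_i. -/
open MeasureTheory ContinuousLinearMap
open scoped InnerProductSpace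

variable {H : Type*} [NormedAddCommGroup H] [InnerProductSpace ℂ H] [CompleteSpace H]
variable {X : Type*} [MetricSpace X] [CompactSpace X] [MeasurableSpace X] [BorelSpace X]

/-- The composition `σ_{i_1} ∘ ⋯ ∘ σ_{i_k}` for a multi-index `i`. -/
def compIFS {N : ℕ} (σ : Fin N → X → X) {k : ℕ} (i : Fin k → Fin N) : X → X :=
  (List.ofFn fun j => σ (i j)).foldr (· ∘ ·) id

/-- `A_k(i) = σ_{i_1} ∘ ⋯ ∘ σ_{i_k}(X)`. -/
def Ak {N : ℕ} (σ : Fin N → X → X) {k : ℕ} (i : Fin k → Fin N) : Set X :=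
  Set.range (compIFS σ i)

/-- The IFS is complete if the diameters of `A_k(i_1,…,i_k)` tend to `0` along every
infinite word `(i_1, i_2, …)`. -/
def CompleteIFS {N : ℕ} (σ : Fin N → X → X) : Prop :=
  ∀ s : ℕ → Fin N,
    Filter.Tendsto (fun k : ℕ => Metric.diam (Ak σ fun j : Fin k => s j))
      Filter.atTop (nhds 0)

/-- The IFS is non-overlapping if for each `k` the sets `A_k(i)` are pairwise disjoint. -/
def NonOverlapping {N : ℕ} (σ : Fin N → X → X) : Prop :=
  ∀ k : ℕ, ∀ i i' : Fin k → Fin N, i ≠ i' → Disjoint (Ak σ i) (Ak σ i')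

/-- A Borel measure `μ` on `X` is a spectral measure of `g` if `μ(X) = ‖g‖²`
and `μ(A_k(i)) = ‖S_i^* g‖²` for every `k ≥ 1` and multi-index `i`. -/
def IsSpectralMeasureX {N : ℕ} (S : Fin N → H →L[ℂ] H) (σ : Fin N → X → X) (g : H)
    (μ : Measure X) : Prop :=
  μ Set.univ = ENNReal.ofReal (‖g‖ ^ 2) ∧
    ∀ k : ℕ, 1 ≤ k → ∀ i : Fin k → Fin N,
      μ (Ak σ i) = ENNReal.ofReal (‖adjoint (Sw S i) g‖ ^ 2)

/-!
Both `ν` and the pushforward `μ ∘ σᵢ⁻¹` are finite measures of mass `‖f‖²` concentrated on every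
level `⋃_{|w| = m} A(w)`, because `∑_{|w| = m} ‖S_w^* g‖² = ‖g‖²`. They agree on each cylinder
`A(a t) = σ_a(A(t))`: the Cuntz relations give `ν(A(a t)) = ‖S_t^* S_a^* S_i f‖²`, which is `0` for
`a ≠ i` and `μ(A(t))` for `a = i`, while by non-overlapping `σᵢ⁻¹(A(a t))` is empty for `a ≠ i` and
agrees with `A(t)` on the level `m = |t|` for `a = i`. Completeness of the IFS, made uniform by
Dini's theorem on the compact space of infinite words, makes these partitions arbitrarily fine, so
the two measures agree on closed sets (approximate a closed set from outside by thickenings) and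
hence everywhere.
-/

open Set Filter Topology Metric

structure FinePartitions {α : Type*} [PseudoMetricSpace α] [MeasurableSpace α] {ι : ℕ → Type*}
    (P : ∀ m, ι m → Set α) : Prop where
  measurableSet : ∀ m j, MeasurableSet (P m j)
  pairwise_disjoint : ∀ m, Pairwise fun j j' => Disjoint (P m j) (P m j')
  isBounded : ∀ m j, Bornology.IsBounded (P m j)
  exists_diam_lt : ∀ δ > 0, ∃ m, ∀ j, diam (P m j) < δ

namespace FinePartitions

variable {α : Type*} [PseudoMetricSpace α] [MeasurableSpace α] {ι : ℕ → Type*}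
  {P : ∀ m, ι m → Set α} {μ ν : Measure α}

theorem measure_biUnion_finset_congr (hP : FinePartitions P)
    (hagree : ∀ m j, ν (P m j) = μ (P m j)) (m : ℕ) (J : Finset (ι m)) :
    ν (⋃ j ∈ J, P m j) = μ (⋃ j ∈ J, P m j) := by
  have hdisj := (hP.pairwise_disjoint m).set_pairwise (J : Set (ι m))
  rw [measure_biUnion_finset hdisj fun j _ => hP.measurableSet m j,
    measure_biUnion_finset hdisj fun j _ => hP.measurableSet m j]
  exact Finset.sum_congr rfl fun j _ => hagree m j

theorem measure_le_of_isClosed [OpensMeasurableSpace α] [∀ m, Fintype (ι m)]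
    [IsFiniteMeasure μ] (hP : FinePartitions P) (hν : ∀ m, ν (⋃ j, P m j)ᶜ = 0)
    (hagree : ∀ m j, ν (P m j) = μ (P m j))
    {F : Set α} (hF : IsClosed F) : ν F ≤ μ F := by
  classical
  have hthick : ∀ δ > 0, ν F ≤ μ (thickening δ F) := by
    intro δ hδ
    obtain ⟨m, hm⟩ := hP.exists_diam_lt δ hδ
    set J := Finset.univ.filter fun j => (P m j ∩ F).Nonempty
    have hcover : F ∩ ⋃ j, P m j ⊆ ⋃ j ∈ J, P m j := by
      rintro x ⟨hxF, hx⟩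
      obtain ⟨j, hj⟩ := mem_iUnion.mp hx
      exact mem_biUnion (Finset.mem_filter.mpr ⟨Finset.mem_univ j, x, hj, hxF⟩) hj
    have hthin : ⋃ j ∈ J, P m j ⊆ thickening δ F := by
      refine iUnion₂_subset fun j hj y hy => ?_
      obtain ⟨x, hxj, hxF⟩ := (Finset.mem_filter.mp hj).2
      exact mem_thickening_iff.mpr
        ⟨x, hxF, (dist_le_diam_of_mem (hP.isBounded m j) hy hxj).trans_lt (hm j)⟩
    calc ν F = ν (F ∩ ⋃ j, P m j) := (measure_inter_conull (hν m)).symm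
      _ ≤ ν (⋃ j ∈ J, P m j) := measure_mono hcover
      _ = μ (⋃ j ∈ J, P m j) := hP.measure_biUnion_finset_congr hagree m J
      _ ≤ μ (thickening δ F) := measure_mono hthin
  exact ge_of_tendsto
    (tendsto_measure_thickening_of_isClosed ⟨1, one_pos, measure_ne_top μ _⟩ hF)
    (eventually_nhdsWithin_of_forall hthick)

theorem measure_eq [BorelSpace α] [∀ m, Fintype (ι m)] [IsFiniteMeasure μ] [IsFiniteMeasure ν]
    (hP : FinePartitions P) (hν : ∀ m, ν (⋃ j, P m j)ᶜ = 0)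
    (hagree : ∀ m j, ν (P m j) = μ (P m j)) (huniv : ν univ = μ univ) : ν = μ := by
  have hμ : ∀ m, μ (⋃ j, P m j)ᶜ = 0 := by
    intro m
    have hK : μ (⋃ j, P m j) = μ univ := by
      have := hP.measure_biUnion_finset_congr hagree m Finset.univ
      simp only [Finset.mem_univ, iUnion_true] at this
      rw [← this, ← huniv, ← univ_inter (⋃ j, P m j), measure_inter_conull (hν m)]
    rw [measure_compl (MeasurableSet.iUnion (hP.measurableSet m)) (measure_ne_top μ _), hK,
      tsub_self]
  refine ext_of_generate_finite _
    (borel_eq_generateFrom_isClosed (α := α) ▸ BorelSpace.measurable_eq) isPiSystem_isClosed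
    (fun F hF => le_antisymm ?_ ?_) huniv
  · exact hP.measure_le_of_isClosed hν hagree hF
  · exact hP.measure_le_of_isClosed hμ (fun m j => (hagree m j).symm) hF

end FinePartitions

section IFS

variable {α : Type*} {N : ℕ} {σ : Fin N → α → α}

theorem compIFS_cons (a : Fin N) {k : ℕ} (w : Fin k → Fin N) :
    compIFS σ (Fin.cons a w) = σ a ∘ compIFS σ w := by
  simp [compIFS, List.ofFn_succ]

theorem compIFS_eq_init_comp {k : ℕ} (w : Fin (k + 1) → Fin N) :
    compIFS σ w = compIFS σ (Fin.init w) ∘ σ (w (Fin.last k)) := by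
  have foldr_comp : ∀ (l : List (α → α)) (g : α → α),
      l.foldr (· ∘ ·) g = l.foldr (· ∘ ·) id ∘ g := fun l g => by
    induction l <;> simp_all [Function.comp_assoc]
  simp only [compIFS, List.ofFn_succ', List.concat_eq_append, List.foldr_append]
  exact foldr_comp _ _

theorem Ak_of_fin_zero (w : Fin 0 → Fin N) : Ak σ w = univ := by
  simp [Ak, compIFS]

theorem Ak_cons (a : Fin N) {k : ℕ} (w : Fin k → Fin N) :
    Ak σ (Fin.cons a w) = σ a '' Ak σ w := by
  rw [Ak, Ak, compIFS_cons, range_comp]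

theorem Ak_subset_Ak_init {k : ℕ} (w : Fin (k + 1) → Fin N) :
    Ak σ w ⊆ Ak σ (Fin.init w) := by
  rw [Ak, Ak, compIFS_eq_init_comp]
  exact range_comp_subset_range _ _

theorem continuous_compIFS [TopologicalSpace α] (hcont : ∀ i, Continuous (σ i)) {k : ℕ}
    (w : Fin k → Fin N) : Continuous (compIFS σ w) := by
  induction k with
  | zero => simpa [compIFS] using continuous_id
  | succ k ih =>
    rw [← Fin.cons_self_tail w, compIFS_cons]
    exact (hcont _).comp (ih _)

theorem NonOverlapping.disjoint_image_range (hno : NonOverlapping σ) {a b : Fin N} (hab : a ≠ b)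
    (s : Set α) : Disjoint (σ a '' s) (range (σ b)) := by
  have h := hno 1 ![a] ![b] fun h => hab (congrFun h 0)
  simp only [Matrix.vecCons, Ak_cons, Ak_of_fin_zero, image_univ] at h
  exact h.mono_left (image_subset_range _ _)

theorem NonOverlapping.preimage_image_Ak_inter_subset (hno : NonOverlapping σ) (i : Fin N)
    {m : ℕ} (t : Fin m → Fin N) :
    σ i ⁻¹' (σ i '' Ak σ t) ∩ ⋃ t' : Fin m → Fin N, Ak σ t' ⊆ Ak σ t := by
  rintro x ⟨hxt, hx⟩
  obtain ⟨t', hxt'⟩ := mem_iUnion.mp hx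
  obtain rfl | hne := eq_or_ne t' t
  · exact hxt'
  · have h := hno (m + 1) _ _ (Fin.cons_right_injective i |>.ne hne)
    rw [Ak_cons, Ak_cons] at h
    exact absurd hxt (h.notMem_of_mem_left (mem_image_of_mem _ hxt'))

end IFS

section IFSMetric

variable {α : Type*} [MetricSpace α] [CompactSpace α] {N : ℕ} {σ : Fin N → α → α}

theorem isCompact_Ak (hcont : ∀ i, Continuous (σ i)) {k : ℕ} (w : Fin k → Fin N) :
    IsCompact (Ak σ w) :=
  isCompact_range (continuous_compIFS hcont w)

theorem measurableSet_Ak [MeasurableSpace α] [OpensMeasurableSpace α]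
    (hcont : ∀ i, Continuous (σ i)) {k : ℕ} (w : Fin k → Fin N) : MeasurableSet (Ak σ w) :=
  (isCompact_Ak hcont w).isClosed.measurableSet

theorem CompleteIFS.exists_diam_Ak_lt (hcomp : CompleteIFS σ) (hcont : ∀ i, Continuous (σ i))
    {ε : ℝ} (hε : 0 < ε) : ∃ m, ∀ w : Fin m → Fin N, diam (Ak σ w) < ε := by
  set F : ℕ → (ℕ → Fin N) → ℝ := fun k s => diam (Ak σ fun j : Fin k => s j)
  have hF_cont : ∀ k, Continuous (F k) := fun k =>
    (continuous_of_discreteTopology (f := fun w : Fin k → Fin N => diam (Ak σ w))).comp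
      (continuous_pi fun j => continuous_apply (j : ℕ))
  have hF_anti : Antitone F := by
    refine antitone_nat_of_succ_le fun k s => ?_
    exact diam_mono (Ak_subset_Ak_init _) (isCompact_Ak hcont _).isBounded
  have hunif := hF_anti.tendstoUniformly_of_forall_tendsto hF_cont continuous_const hcomp
  obtain ⟨m, hm, hm1⟩ :=
    ((Metric.tendstoUniformly_iff.mp hunif ε hε).and (eventually_ge_atTop 1)).exists
  refine ⟨m, fun w => ?_⟩
  have hw : (fun j : Fin m => w ⟨min j (m - 1), by omega⟩) = w := by
    funext j; congr 1; exact Fin.ext (min_eq_left (by omega))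
  simpa [F, hw, abs_of_nonneg diam_nonneg] using hm fun k => w ⟨min k (m - 1), by omega⟩

theorem finePartitions_Ak [MeasurableSpace α] [OpensMeasurableSpace α]
    (hcont : ∀ i, Continuous (σ i)) (hno : NonOverlapping σ) (hcomp : CompleteIFS σ) :
    FinePartitions fun m (w : Fin m → Fin N) => Ak σ w where
  measurableSet _ := measurableSet_Ak hcont
  pairwise_disjoint := hno
  isBounded _ w := (isCompact_Ak hcont w).isBounded
  exists_diam_lt _ := hcomp.exists_diam_Ak_lt hcont

end IFSMetric

section Cuntz

variable {E : Type*} [NormedAddCommGroup E] [InnerProductSpace ℂ E] {N : ℕ}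
  {S : Fin N → E →L[ℂ] E}

theorem Sw_of_fin_zero (w : Fin 0 → Fin N) : Sw S w = 1 := rfl

theorem Sw_cons (a : Fin N) {k : ℕ} (w : Fin k → Fin N) :
    Sw S (Fin.cons a w) = S a ∘L Sw S w := by
  simp only [Sw, List.ofFn_succ, Fin.cons_zero, Fin.cons_succ, List.prod_cons]
  rfl

variable [CompleteSpace E]

theorem CuntzRep.adjoint_apply_apply (hS : CuntzRep S) (a b : Fin N) (g : E) :
    adjoint (S a) (S b g) = if a = b then g else 0 := by
  simpa [apply_ite (fun T : E →L[ℂ] E => T g)] using congrArg (· g) (hS.1 a b)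

theorem CuntzRep.norm_apply (hS : CuntzRep S) (a : Fin N) (g : E) : ‖S a g‖ = ‖g‖ :=
  (norm_map_iff_adjoint_comp_self (S a)).mpr (by simpa using hS.1 a a) g

theorem CuntzRep.sum_norm_adjoint_sq (hS : CuntzRep S) (g : E) :
    ∑ j, ‖adjoint (S j) g‖ ^ 2 = ‖g‖ ^ 2 := by
  have hsum : ∑ j, S j (adjoint (S j) g) = g := by simpa using congrArg (· g) hS.2
  calc ∑ j, ‖adjoint (S j) g‖ ^ 2 = ∑ j, RCLike.re ⟪g, S j (adjoint (S j) g)⟫_ℂ := by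
        refine Finset.sum_congr rfl fun j _ => ?_
        rw [← adjoint_inner_left, inner_self_eq_norm_sq]
    _ = ‖g‖ ^ 2 := by rw [← map_sum, ← inner_sum, hsum, inner_self_eq_norm_sq]

theorem CuntzRep.sum_norm_adjoint_Sw_sq (hS : CuntzRep S) (m : ℕ) (g : E) :
    ∑ w : Fin m → Fin N, ‖adjoint (Sw S w) g‖ ^ 2 = ‖g‖ ^ 2 := by
  induction m generalizing g with
  | zero => simp [Sw_of_fin_zero, adjoint_one]
  | succ m ih =>
    rw [← (Fin.consEquiv fun _ => Fin N).sum_comp, Fintype.sum_prod_type,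
      ← hS.sum_norm_adjoint_sq]
    refine Finset.sum_congr rfl fun a _ => ?_
    change ∑ w, ‖adjoint (Sw S (Fin.cons a w)) g‖ ^ 2 = _
    simp only [Sw_cons, adjoint_comp, comp_apply, ih]

end Cuntz

namespace IsSpectralMeasureX

variable {E : Type*} [NormedAddCommGroup E] [InnerProductSpace ℂ E] [CompleteSpace E]
  {α : Type*} [MeasurableSpace α] {N : ℕ} {S : Fin N → E →L[ℂ] E} {σ : Fin N → α → α}
  {g : E} {ρ : Measure α}

theorem isFiniteMeasure (hρ : IsSpectralMeasureX S σ g ρ) : IsFiniteMeasure ρ :=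
  ⟨hρ.1 ▸ ENNReal.ofReal_lt_top⟩

theorem measure_Ak (hρ : IsSpectralMeasureX S σ g ρ) {k : ℕ} (w : Fin k → Fin N) :
    ρ (Ak σ w) = ENNReal.ofReal (‖adjoint (Sw S w) g‖ ^ 2) := by
  rcases Nat.eq_zero_or_pos k with rfl | hk
  · rw [Ak_of_fin_zero, Sw_of_fin_zero, adjoint_one, one_apply_eq_self, hρ.1]
  · exact hρ.2 k hk w

theorem measure_iUnion_Ak_compl (hρ : IsSpectralMeasureX S σ g ρ) (hS : CuntzRep S)
    (hmeas : ∀ k (w : Fin k → Fin N), MeasurableSet (Ak σ w)) (hno : NonOverlapping σ)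
    (m : ℕ) : ρ (⋃ w : Fin m → Fin N, Ak σ w)ᶜ = 0 := by
  have hfull : ρ (⋃ w : Fin m → Fin N, Ak σ w) = ρ univ := by
    rw [measure_iUnion (hno m) (hmeas m), tsum_fintype, hρ.1, ← hS.sum_norm_adjoint_Sw_sq m,
      ENNReal.ofReal_sum_of_nonneg fun w _ => by positivity]
    exact Finset.sum_congr rfl fun w _ => hρ.measure_Ak w
  have := hρ.isFiniteMeasure
  rw [measure_compl (MeasurableSet.iUnion (hmeas m)) (measure_ne_top ρ _), hfull, tsub_self]

theorem measure_preimage_image_Ak (hρ : IsSpectralMeasureX S σ g ρ) (hS : CuntzRep S)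
    (hmeas : ∀ k (w : Fin k → Fin N), MeasurableSet (Ak σ w)) (hno : NonOverlapping σ)
    (i : Fin N) {m : ℕ} (t : Fin m → Fin N) :
    ρ (σ i ⁻¹' (σ i '' Ak σ t)) = ρ (Ak σ t) := by
  refine le_antisymm ?_ (measure_mono (subset_preimage_image _ _))
  calc ρ (σ i ⁻¹' (σ i '' Ak σ t))
      = ρ (σ i ⁻¹' (σ i '' Ak σ t) ∩ ⋃ t' : Fin m → Fin N, Ak σ t') :=
        (measure_inter_conull (hρ.measure_iUnion_Ak_compl hS hmeas hno m)).symm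
    _ ≤ ρ (Ak σ t) := measure_mono (hno.preimage_image_Ak_inter_subset i t)

end IsSpectralMeasureX

theorem measure_Ak_eq_map_apply {E : Type*} [NormedAddCommGroup E] [InnerProductSpace ℂ E]
    [CompleteSpace E] {α : Type*} [MeasurableSpace α] {N : ℕ} {S : Fin N → E →L[ℂ] E}
    (hS : CuntzRep S) {σ : Fin N → α → α} (hσ : ∀ i, Measurable (σ i))
    (hmeas : ∀ k (w : Fin k → Fin N), MeasurableSet (Ak σ w)) (hno : NonOverlapping σ)
    {f : E} {i : Fin N} {μ ν : Measure α} (hμ : IsSpectralMeasureX S σ f μ)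
    (hν : IsSpectralMeasureX S σ (S i f) ν) {m : ℕ} (w : Fin m → Fin N) :
    ν (Ak σ w) = μ.map (σ i) (Ak σ w) := by
  rw [Measure.map_apply (hσ i) (hmeas m w)]
  cases m with
  | zero => rw [Ak_of_fin_zero, preimage_univ, hν.1, hμ.1, hS.norm_apply]
  | succ m =>
    rw [← Fin.cons_self_tail w, hν.measure_Ak, Sw_cons, adjoint_comp, comp_apply,
      hS.adjoint_apply_apply, Ak_cons]
    split_ifs with ha
    · rw [ha, hμ.measure_preimage_image_Ak hS hmeas hno, hμ.measure_Ak]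
    · rw [map_zero, norm_zero, preimage_eq_empty (hno.disjoint_image_range ha _)]
      simp

theorem stmt_13_general {N : ℕ} (S : Fin N → H →L[ℂ] H) (hS : CuntzRep S)
    (σ : Fin N → X → X) (hcont : ∀ i, Continuous (σ i))
    (hcomp : CompleteIFS σ) (hno : NonOverlapping σ)
    (f : H) (i : Fin N)
    (μ : Measure X) (hμ : IsSpectralMeasureX S σ f μ)
    (ν : Measure X) (hν : IsSpectralMeasureX S σ (S i f) ν) :
    ν = Measure.map (σ i) μ := by
  have hmeas : ∀ k (w : Fin k → Fin N), MeasurableSet (Ak σ w) :=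
    fun _ => measurableSet_Ak hcont
  have hagree : ∀ m (w : Fin m → Fin N), ν (Ak σ w) = μ.map (σ i) (Ak σ w) :=
    fun _ => measure_Ak_eq_map_apply hS (fun j => (hcont j).measurable) hmeas hno hμ hν
  have := hμ.isFiniteMeasure
  have := hν.isFiniteMeasure
  refine (finePartitions_Ak hcont hno hcomp).measure_eq
    (hν.measure_iUnion_Ak_compl hS hmeas hno) hagree ?_
  simpa only [Ak_of_fin_zero] using hagree 0 Fin.elim0

/-- If `μ` is a spectral measure of `f` and `ν` is a spectral measure of `S_i f`, then
`ν = μ ∘ σ_i⁻¹`, the pushforward of `μ` under `σ_i`. -/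
theorem stmt_13 {N : ℕ} (hN : 2 ≤ N) (S : Fin N → H →L[ℂ] H) (hS : CuntzRep S)
    (σ : Fin N → X → X) (hcont : ∀ i, Continuous (σ i))
    (hcomp : CompleteIFS σ) (hno : NonOverlapping σ)
    (f : H) (i : Fin N)
    (μ : Measure X) (hμ : IsSpectralMeasureX S σ f μ)
    (ν : Measure X) (hν : IsSpectralMeasureX S σ (S i f) ν) :
    ν = Measure.map (σ i) μ :=
  stmt_13_general S hS σ hcont hcomp hno f i μ hμ ν hν
end
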